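/- Let k ≥ 2 and let α ∈ Sₖ be a permutation fixing k whose number of descents is j−1 (where 1 ≤ j ≤ k−1). Then among the k permutations α, ατₖ, ατₖ², …, ατₖ^{k−1}, exactly j of them have j−1 descents and the remaining k−j of them have j descents. -/

import Mathlib

noncomputable section

/-- Number of descents of a permutation of `Fin n`. -/
def descents {n : ℕ} (σ : Equiv.Perm (Fin n)) : ℕ :=
  (Finset.univ.filter fun p : Fin n × Fin n =>
    (p.2 : ℕ) = (p.1 : ℕ) + 1 ∧ σ p.2 < σ p.1).card

/-- The `k`-cycle `τₖ` sending `1 ↦ k` and `i ↦ i-1` for `2 ≤ i ≤ k`. -/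
def tau (k : ℕ) : Equiv.Perm (Fin k) := (finRotate k)⁻¹

/-! A cyclic descent of σ ∈ Sₖ is a position m with σ(m+1) < σ(m), indices read mod k.
Precomposing with τₖ^i only rotates positions, so all ατₖ^i have as many cyclic descents as α,
namely j: since α fixes k, the wrap-around position k is one of them. The ordinary descents of
ατₖ^i are its cyclic descents other than position k, and k is a cyclic descent of ατₖ^i iff
k − i (mod k) is one of α; as i runs through 0, …, k − 1 this position runs through all of
{1, …, k}, hitting the j cyclic descents of α exactly once each. -/

open Finset
open scoped Fin.NatCast Fin.CommRing

variable {n : ℕ}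

-- Positions are 0-based: `Fin.last n` is the position k of the paper.
def cyclicDescents (σ : Equiv.Perm (Fin (n + 1))) : Finset (Fin (n + 1)) :=
  univ.filter fun m => σ (finRotate (n + 1) m) < σ m

theorem descents_eq_card_filter_succ_lt (σ : Equiv.Perm (Fin (n + 1))) :
    descents σ = #(univ.filter fun i : Fin n => σ i.succ < σ i.castSucc) := by
  symm
  refine card_bij (fun i _ => (i.castSucc, i.succ)) ?_ ?_ ?_
  · intro i hi
    simpa using hi
  · intro a _ b _ h
    exact Fin.castSucc_injective n (congrArg Prod.fst h)
  · rintro ⟨⟨a, ha⟩, ⟨b, hb⟩⟩ hp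
    simp only [mem_filter, mem_univ, true_and] at hp
    obtain ⟨rfl, hlt⟩ := hp
    exact ⟨⟨a, by omega⟩, by simpa using hlt, rfl⟩

theorem card_cyclicDescents (σ : Equiv.Perm (Fin (n + 1))) :
    #(cyclicDescents σ) = descents σ + if Fin.last n ∈ cyclicDescents σ then 1 else 0 := by
  rw [cyclicDescents, card_filter, Fin.sum_univ_castSucc, descents_eq_card_filter_succ_lt,
    card_filter]
  simp

theorem cyclicDescents_mul_of_commute (σ π : Equiv.Perm (Fin (n + 1)))
    (h : Commute π (finRotate (n + 1))) :
    cyclicDescents (σ * π) = (cyclicDescents σ).map π.symm.toEmbedding := by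
  ext m
  have hπ : π (finRotate (n + 1) m) = finRotate (n + 1) (π m) := DFunLike.congr_fun h.eq m
  rw [mem_map_equiv, Equiv.symm_symm, cyclicDescents, cyclicDescents, mem_filter, mem_filter,
    Equiv.Perm.mul_apply, Equiv.Perm.mul_apply, hπ]
  simp

theorem last_mem_cyclicDescents (σ : Equiv.Perm (Fin (n + 1))) (hn : n ≠ 0)
    (hσ : σ (Fin.last n) = Fin.last n) : Fin.last n ∈ cyclicDescents σ := by
  have h0 : σ 0 ≠ Fin.last n := by
    rw [← hσ, σ.injective.ne_iff]
    simpa [Fin.ext_iff, eq_comm] using hn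
  simpa [cyclicDescents, finRotate_last, hσ] using lt_of_le_of_ne (Fin.le_last _) h0

theorem commute_tau_pow_finRotate (k i : ℕ) : Commute (tau k ^ i) (finRotate k) :=
  (Commute.refl _).inv_left.pow_left i

theorem tau_pow_apply (i : ℕ) (m : Fin (n + 1)) : (tau (n + 1) ^ i) m = m - i := by
  induction i with
  | zero => simp
  | succ i ih =>
    rw [pow_succ', Equiv.Perm.mul_apply, ih, tau, Equiv.Perm.inv_def, finRotate_symm_apply]
    push_cast
    ring

theorem descents_mul_tau_pow_add_ite (σ : Equiv.Perm (Fin (n + 1))) (i : ℕ) :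
    descents (σ * tau (n + 1) ^ i) +
      (if Fin.last n - (i : Fin (n + 1)) ∈ cyclicDescents σ then 1 else 0) =
      #(cyclicDescents σ) := by
  have h := card_cyclicDescents (σ * tau (n + 1) ^ i)
  simp only [cyclicDescents_mul_of_commute _ _ (commute_tau_pow_finRotate _ i), card_map,
    mem_map_equiv, Equiv.symm_symm, tau_pow_apply] at h
  exact h.symm

theorem card_filter_range_sub_mem (x : Fin (n + 1)) (S : Finset (Fin (n + 1))) :
    #((range (n + 1)).filter fun i : ℕ => x - (i : Fin (n + 1)) ∈ S) = #S := by
  refine card_nbij' (fun i => x - i) (fun m => (x - m : Fin (n + 1)).val) ?_ ?_ ?_ ?_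
  · intro i hi
    simp only [coe_filter] at hi
    exact hi.2
  · intro m hm
    simp only [coe_filter, mem_range, Set.mem_ofPred_eq, Fin.cast_val_eq_self, sub_sub_cancel]
    exact ⟨(x - m).isLt, hm⟩
  · intro i hi
    simp only [coe_filter, mem_range, Set.mem_ofPred_eq] at hi
    simp [Fin.val_cast_of_lt hi.1]
  · intro m _
    simp

/-- If `α ∈ Sₖ` fixes `k` and has `j-1` descents (`1 ≤ j ≤ k-1`), then among
`α, ατₖ, …, ατₖ^{k-1}` exactly `j` have `j-1` descents and the remaining `k-j`
have `j` descents. -/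
theorem descents_mul_tau_pow_count (k j : ℕ) (hk : 2 ≤ k) (hj1 : 1 ≤ j)
    (α : Equiv.Perm (Fin k))
    (hα : α ⟨k - 1, by omega⟩ = ⟨k - 1, by omega⟩)
    (hdes : descents α = j - 1) :
    ((Finset.range k).filter fun i => descents (α * tau k ^ i) = j - 1).card = j ∧
    ((Finset.range k).filter fun i => descents (α * tau k ^ i) = j).card = k - j := by
  obtain ⟨n, rfl⟩ : ∃ n, k = n + 1 := ⟨k - 1, by omega⟩
  have hS : #(cyclicDescents α) = j := by
    have h := card_cyclicDescents α
    rw [if_pos (last_mem_cyclicDescents α (by omega) hα)] at h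
    omega
  have key (i : ℕ) := hS ▸ descents_mul_tau_pow_add_ite α i
  have h₁ : (range (n + 1)).filter (fun i => descents (α * tau (n + 1) ^ i) = j - 1) =
      (range (n + 1)).filter (fun i : ℕ => Fin.last n - (i : Fin (n + 1)) ∈ cyclicDescents α) :=
    filter_congr fun i _ => by have := key i; split_ifs at this <;> simp [*] <;> omega
  have h₂ : (range (n + 1)).filter (fun i => descents (α * tau (n + 1) ^ i) = j) =
      (range (n + 1)).filter (fun i : ℕ => Fin.last n - (i : Fin (n + 1)) ∉ cyclicDescents α) :=
    filter_congr fun i _ => by have := key i; split_ifs at this <;> simp [*] <;> omega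
  have hsplit := card_filter_add_card_filter_not (s := range (n + 1))
    (fun i : ℕ => Fin.last n - (i : Fin (n + 1)) ∈ cyclicDescents α)
  rw [card_range, card_filter_range_sub_mem, hS] at hsplit
  rw [h₁, h₂, card_filter_range_sub_mem, hS]
  omega
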